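/- arXiv:2404.11496 — 4 statements merged into one kernel-verified Lean document; each statement's English description precedes it below -/
import Mathlib

section
/- Fix n ≥ k ≥ 2 and position i ∈ [1..n]. The number of feasible fitness vectors (f_LO, f_TZ) with f_LO ≥ i (all of which force bit 1 at position i) equals (n-i+1)(n-i+2)/2 - (n-i) - [i < n-k]·(n-k-i)(n-k-i+1)/2, where feasible means f_LO + f_TZ ≥ n - k, f_LO + f_TZ ≤ n, and f_LO + f_TZ ≠ n - 1. -/
/-- The set of feasible fitness vectors of LOTZ_k: pairs `(f_LO, f_TZ)` with
`n - k ≤ f_LO + f_TZ ≤ n` and `f_LO + f_TZ ≠ n - 1`. -/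
def feasibleVectors (n k : ℕ) : Finset (ℕ × ℕ) :=
  (Finset.range (n + 1) ×ˢ Finset.range (n + 1)).filter
    (fun p => n - k ≤ p.1 + p.2 ∧ p.1 + p.2 ≤ n ∧ p.1 + p.2 ≠ n - 1)

/-!
Among the pairs with `i ≤ a`, the feasible ones are the triangle `a + b ≤ n`, minus the diagonal
`a + b = n - 1`, minus the triangle `a + b < n - k`. The pairs with `i ≤ a` and `a + b < m` are
counted diagonal by diagonal, giving `1 + 2 + ⋯ + (m - i) = (m + 1 - i).choose 2`.
-/

open Finset

def triangle (i m : ℕ) : Finset (ℕ × ℕ) :=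
  {p ∈ range m ×ˢ range m | i ≤ p.1 ∧ p.1 + p.2 < m}

@[simp]
lemma mem_triangle {i m : ℕ} {p : ℕ × ℕ} :
    p ∈ triangle i m ↔ i ≤ p.1 ∧ p.1 + p.2 < m := by
  simp only [triangle, mem_filter, mem_product, mem_range, and_iff_right_iff_imp]
  omega

lemma card_filter_le_fst_antidiagonal (i m : ℕ) :
    #{p ∈ antidiagonal m | i ≤ p.1} = m + 1 - i := by
  rcases le_or_gt i m with h | h
  · rw [Nat.antidiagonal_filter_le_fst_of_le h, card_map, Nat.card_antidiagonal]
    omega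
  · have hempty : {p ∈ antidiagonal m | i ≤ p.1} = ∅ :=
      filter_false_of_mem fun p hp => by rw [HasAntidiagonal.mem_antidiagonal] at hp; omega
    rw [hempty, card_empty]
    omega

lemma triangle_succ (i m : ℕ) :
    triangle i (m + 1) = triangle i m ∪ {p ∈ antidiagonal m | i ≤ p.1} := by
  ext p
  simp only [mem_union, mem_triangle, mem_filter, HasAntidiagonal.mem_antidiagonal]
  omega

lemma disjoint_triangle_antidiagonal (i m : ℕ) :
    Disjoint (triangle i m) {p ∈ antidiagonal m | i ≤ p.1} := by
  rw [disjoint_left]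
  intro p hp hp'
  rw [mem_triangle] at hp
  rw [mem_filter, HasAntidiagonal.mem_antidiagonal] at hp'
  omega

lemma succ_choose_two (m : ℕ) : (m + 1).choose 2 = m * (m + 1) / 2 := by
  rw [Nat.choose_two_right, Nat.add_sub_cancel, mul_comm]

lemma card_triangle (i m : ℕ) : #(triangle i m) = (m + 1 - i).choose 2 := by
  induction m with
  | zero => rw [Nat.choose_eq_zero_of_lt (by omega), card_eq_zero]; ext p; simp
  | succ m ih =>
    rw [triangle_succ, card_union_of_disjoint (disjoint_triangle_antidiagonal i m), ih,
      card_filter_le_fst_antidiagonal]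
    rcases le_or_gt i m with h | h
    · rw [show m + 1 + 1 - i = (m + 1 - i) + 1 by omega, Nat.choose_succ_succ',
        Nat.choose_one_right, add_comm]
    · rw [Nat.choose_eq_zero_of_lt (by omega), Nat.choose_eq_zero_of_lt (by omega)]
      omega

lemma filter_le_fst_feasibleVectors (n k i : ℕ) :
    {p ∈ feasibleVectors n k | i ≤ p.1} =
      (triangle i (n + 1) \ {p ∈ antidiagonal (n - 1) | i ≤ p.1}) \ triangle i (n - k) := by
  ext p
  simp only [feasibleVectors, mem_sdiff, mem_filter, mem_product, mem_range, mem_triangle,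
    HasAntidiagonal.mem_antidiagonal]
  omega

lemma card_filter_le_fst_feasibleVectors {n k : ℕ} (i : ℕ) (hk : 1 ≤ k) (hn : 1 ≤ n) :
    #{p ∈ feasibleVectors n k | i ≤ p.1} =
      (n + 2 - i).choose 2 - (n - i) - (n - k + 1 - i).choose 2 := by
  have hdiag : {p ∈ antidiagonal (n - 1) | i ≤ p.1} ⊆ triangle i (n + 1) := by
    intro p hp
    rw [mem_filter, HasAntidiagonal.mem_antidiagonal] at hp
    rw [mem_triangle]
    omega
  have hstrip :
      triangle i (n - k) ⊆ triangle i (n + 1) \ {p ∈ antidiagonal (n - 1) | i ≤ p.1} := by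
    intro p hp
    rw [mem_triangle] at hp
    rw [mem_sdiff, mem_triangle, mem_filter, HasAntidiagonal.mem_antidiagonal]
    omega
  rw [filter_le_fst_feasibleVectors, card_sdiff_of_subset hstrip, card_sdiff_of_subset hdiag,
    card_triangle, card_triangle, card_filter_le_fst_antidiagonal]
  congr 2
  omega

theorem card_M1_triangle_general (n k i : ℕ) (hk : 2 ≤ k)
    (hi1 : 1 ≤ i) (hin : i ≤ n) :
    ((feasibleVectors n k).filter (fun p => i ≤ p.1)).card =
      (n - i + 1) * (n - i + 2) / 2 - (n - i) -
        (if i < n - k then (n - k - i) * (n - k - i + 1) / 2 else 0) := by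
  rw [card_filter_le_fst_feasibleVectors i (by omega) (by omega),
    show n + 2 - i = n - i + 1 + 1 by omega, succ_choose_two]
  split_ifs with h
  · rw [show n - k + 1 - i = n - k - i + 1 by omega, succ_choose_two]
  · rw [Nat.choose_eq_zero_of_lt (by omega)]

theorem card_M1_triangle (n k i : ℕ) (hk : 2 ≤ k) (hkn : k ≤ n)
    (hi1 : 1 ≤ i) (hin : i ≤ n) :
    ((feasibleVectors n k).filter (fun p => i ≤ p.1)).card =
      (n - i + 1) * (n - i + 2) / 2 - (n - i) -
        (if i < n - k then (n - k - i) * (n - k - i + 1) / 2 else 0) :=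
  card_M1_triangle_general n k i hk hi1 hin
end

section
/- Fix n ≥ k ≥ 2 and position i ∈ [1..n]. The number of feasible fitness vectors (f_LO, f_TZ) that do not determine the bit at position i, namely those with f_LO < i - 1, f_TZ < n - i, and f_LO + f_TZ ≥ n - k, equals m(i) = min(k-2, i-1)·min(k-2, n-i) - a(i)(a(i)+1)/2, where a(i) = max(0, min(k-3, i-2, n-i-1, n-k)). -/
open Finset

lemma card_filter_le_add_eq_card_filter_add_lt (A B C : ℕ) :
    #((range A ×ˢ range B).filter fun p => C ≤ p.1 + p.2) =
      #((range A ×ˢ range B).filter fun p => p.1 + p.2 < A + B - 1 - C) := by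
  let reflect : ℕ × ℕ → ℕ × ℕ := fun p => (A - 1 - p.1, B - 1 - p.2)
  refine card_nbij' reflect reflect ?_ ?_ ?_ ?_ <;>
    · intro p
      simp only [reflect, coe_filter, mem_product, mem_range, Set.mem_ofPred_eq, Prod.ext_iff]
      omega

lemma card_filter_add_lt_of_le {A B t : ℕ} (hA : t ≤ A) (hB : t ≤ B) :
    #((range A ×ˢ range B).filter fun p => p.1 + p.2 < t) = t * (t + 1) / 2 := by
  induction t with
  | zero => simp
  | succ t ih =>
    have hsplit : ((range A ×ˢ range B).filter fun p => p.1 + p.2 < t + 1) =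
        ((range A ×ˢ range B).filter fun p => p.1 + p.2 < t) ∪ antidiagonal t := by
      ext ⟨a, b⟩
      simp only [mem_filter, mem_union, mem_product, mem_range, HasAntidiagonal.mem_antidiagonal]
      omega
    have hdisj :
        Disjoint ((range A ×ˢ range B).filter fun p => p.1 + p.2 < t) (antidiagonal t) := by
      refine disjoint_left.mpr fun p hp hp' => ?_
      rw [mem_filter] at hp
      rw [HasAntidiagonal.mem_antidiagonal] at hp'
      omega
    rw [hsplit, card_union_of_disjoint hdisj, ih (by omega) (by omega), Nat.card_antidiagonal,
      show (t + 1) * (t + 1 + 1) = t * (t + 1) + (t + 1) * 2 by ring,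
      Nat.add_mul_div_right _ _ two_pos]

lemma filter_add_lt_product_range_eq_min (A B D : ℕ) :
    ((range A ×ˢ range B).filter fun p => p.1 + p.2 < D) =
      (range (min A D) ×ˢ range (min B D)).filter fun p => p.1 + p.2 < D := by
  ext ⟨a, b⟩
  simp only [mem_filter, mem_product, mem_range]
  omega

lemma card_filter_add_lt (A B D : ℕ) :
    #((range A ×ˢ range B).filter fun p => p.1 + p.2 < D) =
      min A D * min B D -
        (min A D + min B D - 1 - D) * (min A D + min B D - 1 - D + 1) / 2 := by
  rw [filter_add_lt_product_range_eq_min]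
  set A' := min A D
  set B' := min B D
  have hA' : A' ≤ D := min_le_right A D
  have hB' : B' ≤ D := min_le_right B D
  have htotal := card_filter_add_card_filter_not (s := range A' ×ˢ range B')
    (fun p => p.1 + p.2 < D)
  simp only [not_lt, card_product, card_range] at htotal
  rw [card_filter_le_add_eq_card_filter_add_lt,
    card_filter_add_lt_of_le (t := A' + B' - 1 - D) (by omega) (by omega)] at htotal
  omega

theorem card_free_vectors_general (n k i : ℕ) (hkn : k ≤ n)
    (hi1 : 1 ≤ i) (hin : i ≤ n) :
    ((feasibleVectors n k).filter (fun p => p.1 < i - 1 ∧ p.2 < n - i)).card =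
      min (k - 2) (i - 1) * min (k - 2) (n - i) -
        (min (k - 3) (min (i - 2) (min (n - i - 1) (n - k)))) *
          ((min (k - 3) (min (i - 2) (min (n - i - 1) (n - k)))) + 1) / 2 := by
  have hfree : (feasibleVectors n k).filter (fun p => p.1 < i - 1 ∧ p.2 < n - i) =
      (range (i - 1) ×ˢ range (n - i)).filter fun p => n - k ≤ p.1 + p.2 := by
    ext ⟨a, b⟩
    simp only [feasibleVectors, mem_filter, mem_product, mem_range]
    omega
  rw [hfree, card_filter_le_add_eq_card_filter_add_lt,
    show i - 1 + (n - i) - 1 - (n - k) = k - 2 by omega, card_filter_add_lt, min_comm (i - 1),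
    min_comm (n - i),
    show min (k - 2) (i - 1) + min (k - 2) (n - i) - 1 - (k - 2) =
      min (k - 3) (min (i - 2) (min (n - i - 1) (n - k))) by omega]

theorem card_free_vectors (n k i : ℕ) (hk : 2 ≤ k) (hkn : k ≤ n)
    (hi1 : 1 ≤ i) (hin : i ≤ n) :
    ((feasibleVectors n k).filter (fun p => p.1 < i - 1 ∧ p.2 < n - i)).card =
      min (k - 2) (i - 1) * min (k - 2) (n - i) -
        (min (k - 3) (min (i - 2) (min (n - i - 1) (n - k)))) *
          ((min (k - 3) (min (i - 2) (min (n - i - 1) (n - k)))) + 1) / 2 :=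
  card_free_vectors_general n k i hkn hi1 hin
end

section
/- For n ≥ k ≥ 2 and position i ∈ [1..n], the count of feasible fitness vectors forcing bit 0 at position i equals m_0(i) = i(i-1)/2 - [i > k+1]·(i-k-1)(i-k)/2 + min(n-i+1, k). -/
/-!
Sort the vectors forcing bit 0 at position `i` by their value `a` of `f_LO`: only `a ≤ i - 1`
occurs, and for fixed `a` the admissible values of `f_TZ` form an interval ending at `n - a` from
which the single value `n - a - 1` (total `n - 1`) is removed. This column has
`min k (i - 1 - a)` elements for `a < i - 1` and `min k (n - i + 1)` for `a = i - 1`. The columns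
`a < i - 1` together contribute `∑_{t < i} min k t`, a difference of two triangular numbers.
-/

open Finset

theorem sum_range_min (k i : ℕ) :
    ∑ t ∈ range i, min k t = i * (i - 1) / 2 - (i - k) * (i - k - 1) / 2 := by
  have hshift : ∑ t ∈ range i, (t - k) = ∑ u ∈ range (i - k), u := by
    rcases le_total i k with hik | hki
    · rw [Nat.sub_eq_zero_of_le hik, sum_range_zero]
      exact sum_eq_zero fun t ht => by simp at ht; omega
    · obtain ⟨m, rfl⟩ := Nat.exists_eq_add_of_le hki
      rw [sum_range_add, Nat.add_sub_cancel_left]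
      simp [sum_eq_zero fun t (ht : t ∈ range k) => Nat.sub_eq_zero_of_le (mem_range.1 ht).le]
  calc ∑ t ∈ range i, min k t = ∑ t ∈ range i, (t - (t - k)) := by
        simp only [Nat.sub_sub_eq_min, min_comm]
    _ = i * (i - 1) / 2 - (i - k) * (i - k - 1) / 2 := by
        rw [sum_tsub_distrib _ fun t _ => Nat.sub_le t k, hshift, sum_range_id, sum_range_id]

theorem sum_range_min_sub (k j : ℕ) :
    ∑ a ∈ range j, min k (j - a) = ∑ t ∈ range (j + 1), min k t := by
  rw [sum_range_succ', ← sum_range_reflect]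
  refine (add_zero _).symm.trans (congrArg₂ _ (sum_congr rfl fun a ha => ?_) (by simp))
  simp only [mem_range] at ha
  congr 2
  omega

theorem card_Icc_erase_sub_one {N m : ℕ} (hm : 1 ≤ m) (hmN : m ≤ N) :
    ((Icc (N - m) N).erase (N - 1)).card = m := by
  rw [card_erase_of_mem (by simp; omega), Nat.card_Icc]
  omega

def forcingZeroVectors (n k i : ℕ) : Finset (ℕ × ℕ) :=
  (feasibleVectors n k).filter (fun p => p.1 = i - 1 ∨ n - i + 1 ≤ p.2)

section forcingZeroVectors

variable {n k i : ℕ}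

theorem fst_lt_of_mem_forcingZeroVectors (hi : 1 ≤ i) {p : ℕ × ℕ}
    (hp : p ∈ forcingZeroVectors n k i) : p.1 < i := by
  simp only [forcingZeroVectors, feasibleVectors, mem_filter] at hp
  omega

theorem card_filter_fst_forcingZeroVectors (hk : 1 ≤ k) (hin : i ≤ n) {a : ℕ} (ha : a < i) :
    ((forcingZeroVectors n k i).filter (·.1 = a)).card =
      min k (if a = i - 1 then n - a else i - 1 - a) := by
  obtain ⟨m, hm⟩ : ∃ m, m = min k (if a = i - 1 then n - a else i - 1 - a) := ⟨_, rfl⟩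
  rw [← hm]
  have hcolumn : (forcingZeroVectors n k i).filter (·.1 = a) =
      ((Icc (n - a - m) (n - a)).erase (n - a - 1)).image (Prod.mk a) := by
    ext ⟨x, y⟩
    simp only [forcingZeroVectors, feasibleVectors, mem_filter, mem_product, mem_range,
      mem_image, mem_erase, mem_Icc, Prod.mk.injEq, exists_eq_right_right]
    split_ifs at hm <;> omega
  rw [hcolumn, card_image_of_injective _ (Prod.mk_right_injective a), card_Icc_erase_sub_one]
  all_goals split_ifs at hm <;> omega

end forcingZeroVectors

theorem card_M0_general (n k i : ℕ) (hk : 2 ≤ k)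
    (hi1 : 1 ≤ i) (hin : i ≤ n) :
    ((feasibleVectors n k).filter (fun p => p.1 = i - 1 ∨ n - i + 1 ≤ p.2)).card =
      i * (i - 1) / 2 - (if k + 1 < i then (i - k - 1) * (i - k) / 2 else 0) +
        min (n - i + 1) k := by
  obtain ⟨j, rfl⟩ : ∃ j, i = j + 1 := ⟨i - 1, by omega⟩
  have hcorrection : (if k + 1 < j + 1 then (j + 1 - k - 1) * (j + 1 - k) / 2 else 0) =
      (j + 1 - k) * (j + 1 - k - 1) / 2 := by
    split_ifs with h
    · rw [Nat.mul_comm]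
    · rw [show j + 1 - k - 1 = 0 by omega]; simp
  calc #(forcingZeroVectors n k (j + 1))
      = ∑ a ∈ range (j + 1), #((forcingZeroVectors n k (j + 1)).filter (·.1 = a)) :=
        card_eq_sum_card_fiberwise fun p hp => mem_range.2 (fst_lt_of_mem_forcingZeroVectors hi1 hp)
    _ = ∑ a ∈ range j, min k (j - a) + min k (n - j) := by
        rw [sum_range_succ, card_filter_fst_forcingZeroVectors (by omega) hin (by omega),
          Nat.add_sub_cancel, if_pos rfl]
        refine congrArg₂ _ (sum_congr rfl fun a ha => ?_) rfl
        have ha : a < j := mem_range.1 ha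
        rw [card_filter_fst_forcingZeroVectors (by omega) hin (by omega), Nat.add_sub_cancel,
          if_neg ha.ne]
    _ = _ := by
        rw [sum_range_min_sub, sum_range_min, hcorrection, min_comm]
        congr 2; omega

theorem card_M0 (n k i : ℕ) (hk : 2 ≤ k) (hkn : k ≤ n)
    (hi1 : 1 ≤ i) (hin : i ≤ n) :
    ((feasibleVectors n k).filter (fun p => p.1 = i - 1 ∨ n - i + 1 ≤ p.2)).card =
      i * (i - 1) / 2 - (if k + 1 < i then (i - k - 1) * (i - k) / 2 else 0) +
        min (n - i + 1) k :=
  card_M0_general n k i hk hi1 hin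
end

section
/- Let n ≥ k ≥ 2 and let x, y ∈ {0,1}^n both be feasible (LO + TZ ≥ n - k). Then neither dominates the other with respect to the three-objective function LOTZ_k(x) = (LO(x), TZ(x), h(LO(x)+TZ(x))), where h(u) = 0 if u < n-k and h(u) = n+1-u if u ≥ n-k. -/
/-! On the feasible region the third objective is `n + 1 - (LO + TZ)`, and `LO + TZ ≤ n` always holds,
so every feasible fitness vector has coordinate sum `n + 1`. Vectors with equal coordinate sums
never dominate one another. -/

/-- Length of the longest all-ones prefix of the bit string `x`. -/
def LO (n : ℕ) (x : Fin n → Bool) : ℕ :=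
  (Finset.univ.filter (fun i : Fin n => ∀ j ≤ i, x j = true)).card

/-- Length of the longest all-zeros suffix of the bit string `x`. -/
def TZ (n : ℕ) (x : Fin n → Bool) : ℕ :=
  (Finset.univ.filter (fun i : Fin n => ∀ j, i ≤ j → x j = false)).card

/-- The third objective of LOTZ_k. -/
def hObj (n k u : ℕ) : ℕ := if u < n - k then 0 else n + 1 - u

/-- The three-objective fitness vector of LOTZ_k. -/
def lotz (n k : ℕ) (x : Fin n → Bool) : ℕ × ℕ × ℕ :=
  (LO n x, TZ n x, hObj n k (LO n x + TZ n x))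

/-- Domination for a three-objective (maximization) function. -/
def Dominates (u v : ℕ × ℕ × ℕ) : Prop :=
  (v.1 ≤ u.1 ∧ v.2.1 ≤ u.2.1 ∧ v.2.2 ≤ u.2.2) ∧
    (v.1 < u.1 ∨ v.2.1 < u.2.1 ∨ v.2.2 < u.2.2)

theorem Dominates.sum_lt {u v : ℕ × ℕ × ℕ} (h : Dominates u v) :
    v.1 + v.2.1 + v.2.2 < u.1 + u.2.1 + u.2.2 := by
  obtain ⟨⟨h₁, h₂, h₃⟩, h₁ | h₂ | h₃⟩ := h <;> omega

theorem not_dominates_of_sum_eq {u v : ℕ × ℕ × ℕ}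
    (h : u.1 + u.2.1 + u.2.2 = v.1 + v.2.1 + v.2.2) : ¬Dominates u v :=
  fun hd => hd.sum_lt.ne h.symm

theorem LO_add_TZ_le (n : ℕ) (x : Fin n → Bool) : LO n x + TZ n x ≤ n := by
  have hdisj : Disjoint
      (Finset.univ.filter fun i : Fin n => ∀ j ≤ i, x j = true)
      (Finset.univ.filter fun i : Fin n => ∀ j, i ≤ j → x j = false) := by
    rw [Finset.disjoint_filter]
    intro i _ hones hzeros
    simpa [hones i le_rfl] using hzeros i le_rfl
  calc LO n x + TZ n x = _ := (Finset.card_union_of_disjoint hdisj).symm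
    _ ≤ Fintype.card (Fin n) := Finset.card_le_univ _
    _ = n := Fintype.card_fin n

theorem hObj_of_le {n k u : ℕ} (h : n - k ≤ u) : hObj n k u = n + 1 - u :=
  if_neg (not_lt.2 h)

theorem lotz_sum_of_feasible {n k : ℕ} {x : Fin n → Bool} (hx : n - k ≤ LO n x + TZ n x) :
    (lotz n k x).1 + (lotz n k x).2.1 + (lotz n k x).2.2 = n + 1 := by
  have := LO_add_TZ_le n x
  simp only [lotz, hObj_of_le hx]
  omega

theorem feasible_mutually_nondominated_general (n k : ℕ)
    (x y : Fin n → Bool) (hx : n - k ≤ LO n x + TZ n x)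
    (hy : n - k ≤ LO n y + TZ n y) :
    ¬Dominates (lotz n k x) (lotz n k y) ∧
    ¬Dominates (lotz n k y) (lotz n k x) := by
  have hsum : (lotz n k x).1 + (lotz n k x).2.1 + (lotz n k x).2.2 =
      (lotz n k y).1 + (lotz n k y).2.1 + (lotz n k y).2.2 := by
    rw [lotz_sum_of_feasible hx, lotz_sum_of_feasible hy]
  exact ⟨not_dominates_of_sum_eq hsum, not_dominates_of_sum_eq hsum.symm⟩

theorem feasible_mutually_nondominated (n k : ℕ) (hk : 2 ≤ k) (hkn : k ≤ n)
    (x y : Fin n → Bool) (hx : n - k ≤ LO n x + TZ n x)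
    (hy : n - k ≤ LO n y + TZ n y) :
    ¬Dominates (lotz n k x) (lotz n k y) ∧
    ¬Dominates (lotz n k y) (lotz n k x) :=
  feasible_mutually_nondominated_general n k x y hx hy
end
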